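/- Define Θ₂(x) = (1/2) θ(x₁)²θ(x₂)²⋯θ(x_d)²·cos((17/12)x_d). Then for every positive multiple n of 16 and all k, ℓ ∈ N(n) with k ≠ ℓ, the Littlewood–Paley block of the function x ↦ Θ₂(2^k A(x − 2^{2n+k} e)) vanishes identically: Δ_ℓ[Θ₂(2^k A(· − 2^{2n+k} e))] = 0. -/

import Mathlib

open MeasureTheory Finset

noncomputable section

/-- The `i`-th coordinate (0-based) of a point of `ℝ^d`, or `0` if `i ≥ d`. -/
def coord (d i : ℕ) (x : EuclideanSpace ℝ (Fin d)) : ℝ :=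
  if h : i < d then x ⟨i, h⟩ else 0

/-- The diagonal matrix `A = diag(ε, ε, 1, …, 1)` applied to a vector. -/
def Amap (d : ℕ) (ε : ℝ) (x : EuclideanSpace ℝ (Fin d)) : EuclideanSpace ℝ (Fin d) :=
  WithLp.toLp 2 (fun i : Fin d => (if (i : ℕ) < 2 then ε else 1) * x i)

/-- The unit vector `e = (√2/2)(1,1,0,…,0)`. -/
def evec (d : ℕ) : EuclideanSpace ℝ (Fin d) :=
  WithLp.toLp 2 (fun i : Fin d => if (i : ℕ) < 2 then Real.sqrt 2 / 2 else 0)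

/-- `N(n) = {k : k positive multiple of 8, n/4 ≤ k ≤ n/2}`. -/
def Nset (n : ℕ) : Finset ℕ :=
  (Finset.range (n + 1)).filter fun k => 0 < k ∧ 8 ∣ k ∧ n ≤ 4 * k ∧ 2 * k ≤ n

/-- Fourier transform on `ℝ^d` with the convention `𝓕f(ξ) = ∫ e^{-i x·ξ} f(x) dx`. -/
def FT (d : ℕ) (f : EuclideanSpace ℝ (Fin d) → ℂ) (ξ : EuclideanSpace ℝ (Fin d)) : ℂ :=
  ∫ x : EuclideanSpace ℝ (Fin d), Complex.exp (-(Complex.I * ((inner ℝ x ξ : ℝ) : ℂ))) * f x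

/-- Inverse Fourier transform `𝓕⁻¹g(x) = (2π)^{-d} ∫ e^{i x·ξ} g(ξ) dξ`. -/
def FTinv (d : ℕ) (g : EuclideanSpace ℝ (Fin d) → ℂ) (x : EuclideanSpace ℝ (Fin d)) : ℂ :=
  (((2 * Real.pi) ^ d : ℝ) : ℂ)⁻¹ *
    ∫ ξ : EuclideanSpace ℝ (Fin d), Complex.exp (Complex.I * ((inner ℝ x ξ : ℝ) : ℂ)) * g ξ

/-- One-dimensional Fourier transform with the convention `𝓕f(ξ) = ∫ e^{-i x ξ} f(x) dx`. -/
def FT1 (f : ℝ → ℂ) (ξ : ℝ) : ℂ :=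
  ∫ x : ℝ, Complex.exp (-(Complex.I * (x * ξ : ℝ))) * f x

/-- `φ(x) = θ(x₁)⋯θ(x_d) sin((17/24) x_d)`. -/
def phi (d : ℕ) (θ : ℝ → ℝ) (x : EuclideanSpace ℝ (Fin d)) : ℝ :=
  (∏ i, θ (x i)) * Real.sin (17 / 24 * coord d (d - 1) x)

/-- `b_n(x) = n^{-1/(2q)} Σ_{k ∈ N(n)} 2^k φ(2^k A(x - 2^{2n+k} e)) sin((17/12) 2^n (e·x))`. -/
def bfun (d : ℕ) (q ε : ℝ) (θ : ℝ → ℝ) (n : ℕ) (x : EuclideanSpace ℝ (Fin d)) : ℝ :=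
  (n : ℝ) ^ (-(1 / (2 * q))) *
    ∑ k ∈ Nset n,
      (2 : ℝ) ^ k * phi d θ ((2 : ℝ) ^ k • Amap d ε (x - (2 : ℝ) ^ (2 * n + k) • evec d)) *
        Real.sin (17 / 12 * 2 ^ n * (inner ℝ (evec d) x : ℝ))

/-- `c_n = 𝓕⁻¹[((ξ₂ - ξ₁)/ξ₂) 𝓕b_n]`. -/
def cfun (d : ℕ) (q ε : ℝ) (θ : ℝ → ℝ) (n : ℕ) (x : EuclideanSpace ℝ (Fin d)) : ℂ :=
  FTinv d (fun ξ => (((coord d 1 ξ - coord d 0 ξ) / coord d 1 ξ : ℝ) : ℂ) *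
    FT d (fun y => (bfun d q ε θ n y : ℂ)) ξ) x

/-- The Littlewood–Paley cutoff `φ_LP(ξ) = χ(ξ/2) - χ(ξ)`. -/
def phiLP (d : ℕ) (χ : EuclideanSpace ℝ (Fin d) → ℝ) (ξ : EuclideanSpace ℝ (Fin d)) : ℝ :=
  χ ((2 : ℝ)⁻¹ • ξ) - χ ξ

/-- The Littlewood–Paley block `Δ_j f = 𝓕⁻¹(φ_LP(2^{-j}·) 𝓕f)`. -/
def LPblock (d : ℕ) (χ : EuclideanSpace ℝ (Fin d) → ℝ) (j : ℤ)
    (f : EuclideanSpace ℝ (Fin d) → ℂ) (x : EuclideanSpace ℝ (Fin d)) : ℂ :=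
  FTinv d (fun ξ => (phiLP d χ ((2 : ℝ) ^ (-j) • ξ) : ℂ) * FT d f ξ) x

/-- Partial derivative `∂_{x_{i+1}} f` (0-based index `i`) of a complex-valued function. -/
def pderivC (d i : ℕ) (f : EuclideanSpace ℝ (Fin d) → ℂ) (x : EuclideanSpace ℝ (Fin d)) : ℂ :=
  if h : i < d then fderiv ℝ f x (EuclideanSpace.single ⟨i, h⟩ 1) else 0

/-- Partial derivative `∂_{x_{i+1}} f` (0-based index `i`) of a real-valued function. -/
def pderivR (d i : ℕ) (f : EuclideanSpace ℝ (Fin d) → ℝ) (x : EuclideanSpace ℝ (Fin d)) : ℝ :=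
  if h : i < d then fderiv ℝ f x (EuclideanSpace.single ⟨i, h⟩ 1) else 0

end


noncomputable section AuxLemmas
open MeasureTheory Complex

lemma norm_exp_I_mul (r : ℝ) : ‖Complex.exp (Complex.I * (r : ℂ))‖ = 1 := by
  rw [Complex.norm_exp]
  simp

lemma norm_exp_neg_I_mul (r : ℝ) : ‖Complex.exp (-(Complex.I * (r : ℂ)))‖ = 1 := by
  rw [Complex.norm_exp]
  simp

lemma ft1_comp_mul_add (g : ℝ → ℂ) (a β ξ : ℝ) (ha : a ≠ 0) :
    FT1 (fun t => g (a * t + β)) ξ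
      = |a⁻¹| • (Complex.exp (Complex.I * ((β * ξ / a : ℝ) : ℂ)) * FT1 g (ξ / a)) := by
  unfold FT1
  have key : ∀ t : ℝ, Complex.exp (-(Complex.I * ((t * ξ : ℝ) : ℂ))) * g (a * t + β)
      = (fun s => Complex.exp (Complex.I * ((β * ξ / a : ℝ) : ℂ)) *
          (Complex.exp (-(Complex.I * ((s * (ξ / a) : ℝ) : ℂ))) * g s)) (a * t + β) := by
    intro t
    simp only
    rw [← mul_assoc, ← Complex.exp_add]
    congr 2
    have ha' : (a : ℂ) ≠ 0 := by exact_mod_cast ha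
    push_cast
    field_simp
    ring
  simp_rw [key]
  rw [show (fun t : ℝ => (fun s => Complex.exp (Complex.I * ((β * ξ / a : ℝ) : ℂ)) *
          (Complex.exp (-(Complex.I * ((s * (ξ / a) : ℝ) : ℂ))) * g s)) (a * t + β))
      = (fun t : ℝ => (fun u => Complex.exp (Complex.I * ((β * ξ / a : ℝ) : ℂ)) *
          (Complex.exp (-(Complex.I * (((u + β) * (ξ / a) : ℝ) : ℂ))) * g (u + β))) (a * t)) from rfl]
  rw [MeasureTheory.Measure.integral_comp_mul_left
    (fun u => Complex.exp (Complex.I * ((β * ξ / a : ℝ) : ℂ)) *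
          (Complex.exp (-(Complex.I * (((u + β) * (ξ / a) : ℝ) : ℂ))) * g (u + β))) a]
  congr 1
  rw [MeasureTheory.integral_add_right_eq_self
    (fun s => Complex.exp (Complex.I * ((β * ξ / a : ℝ) : ℂ)) *
          (Complex.exp (-(Complex.I * ((s * (ξ / a) : ℝ) : ℂ))) * g s)) β]
  rw [MeasureTheory.integral_const_mul]

lemma ft1_const_mul (c : ℂ) (h : ℝ → ℂ) (ξ : ℝ) :
    FT1 (fun t => c * h t) ξ = c * FT1 h ξ := by
  unfold FT1
  rw [← MeasureTheory.integral_const_mul]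
  congr 1; funext t; ring

lemma ft1_cos_split (h : ℝ → ℂ) (c ξ : ℝ)
    (h1 : Integrable (fun t => Complex.exp (-(Complex.I * ((t * (ξ - c) : ℝ) : ℂ))) * h t))
    (h2 : Integrable (fun t => Complex.exp (-(Complex.I * ((t * (ξ + c) : ℝ) : ℂ))) * h t)) :
    FT1 (fun t => ((Real.cos (c * t) : ℝ) : ℂ) * h t) ξ = (FT1 h (ξ - c) + FT1 h (ξ + c)) / 2 := by
  unfold FT1
  have key : ∀ t : ℝ, Complex.exp (-(Complex.I * ((t * ξ : ℝ) : ℂ))) *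
      (((Real.cos (c * t) : ℝ) : ℂ) * h t)
      = (Complex.exp (-(Complex.I * ((t * (ξ - c) : ℝ) : ℂ))) * h t +
         Complex.exp (-(Complex.I * ((t * (ξ + c) : ℝ) : ℂ))) * h t) / 2 := by
    intro t
    rw [Complex.ofReal_cos]
    simp only [Complex.cos]
    have e1 : Complex.exp (-(Complex.I * ((t * ξ : ℝ) : ℂ))) * Complex.exp ((c * t : ℝ) * Complex.I)
        = Complex.exp (-(Complex.I * ((t * (ξ - c) : ℝ) : ℂ))) := by
      rw [← Complex.exp_add]; congr 1; push_cast; ring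
    have e2 : Complex.exp (-(Complex.I * ((t * ξ : ℝ) : ℂ))) * Complex.exp (-((c * t : ℝ) : ℂ) * Complex.I)
        = Complex.exp (-(Complex.I * ((t * (ξ + c) : ℝ) : ℂ))) := by
      rw [← Complex.exp_add]; congr 1; push_cast; ring
    calc Complex.exp (-(Complex.I * ((t * ξ : ℝ) : ℂ))) *
        ((Complex.exp ((c * t : ℝ) * Complex.I) + Complex.exp (-((c * t : ℝ) : ℂ) * Complex.I)) / 2 * h t)
        = ((Complex.exp (-(Complex.I * ((t * ξ : ℝ) : ℂ))) * Complex.exp ((c * t : ℝ) * Complex.I)) * h t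
          + (Complex.exp (-(Complex.I * ((t * ξ : ℝ) : ℂ))) * Complex.exp (-((c * t : ℝ) : ℂ) * Complex.I)) * h t) / 2 := by ring
      _ = _ := by rw [e1, e2]
  simp_rw [key]
  rw [integral_div, MeasureTheory.integral_add h1 h2]

open FourierTransform RealInnerProductSpace in
lemma ft1_sq_support (d : ℕ) (hd : 4 ≤ d) (θ : SchwartzMap ℝ ℝ)
    (hθsm : ContDiff ℝ (⊤ : ℕ∞) fun ξ : ℝ => FT1 (fun x => (θ x : ℂ)) ξ)
    (hθ0 : ∀ ξ : ℝ, 1 / (100 * d) ≤ |ξ| → FT1 (fun x => (θ x : ℂ)) ξ = 0)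
    {ξ : ℝ} (hξ : 1 / (50 * d) ≤ |ξ|) :
    FT1 (fun t => ((θ t : ℂ)) ^ 2) ξ = 0 := by
  set Θ : ℝ → ℂ := fun x => (θ x : ℂ) with hΘ
  have hd0 : (0 : ℝ) < d := by positivity
  have hπ : (0 : ℝ) < Real.pi := Real.pi_pos
  have hΘc : Continuous Θ := Complex.continuous_ofReal.comp θ.continuous
  have hΘi : Integrable Θ := θ.integrable.ofReal
  have hFT1c : Continuous (FT1 Θ) := hθsm.continuous
  have hrel2 : ∀ v : ℝ, 𝓕 Θ v = FT1 Θ (2 * Real.pi * v) := by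
    intro v
    rw [Real.fourier_eq']
    unfold FT1
    apply integral_congr_ae
    filter_upwards with x
    rw [smul_eq_mul]
    congr 1
    have : (inner ℝ x v : ℝ) = x * v := by simp [RCLike.inner_apply]; ring
    rw [this]
    push_cast
    ring
  have hFT1cs : HasCompactSupport (FT1 Θ) := by
    apply HasCompactSupport.intro (isCompact_closedBall (0:ℝ) (1/(100*d)))
    intro v hv
    apply hθ0
    simp only [Metric.mem_closedBall, Real.dist_eq, sub_zero, not_le] at hv
    linarith
  have hFT1int : Integrable (FT1 Θ) := hFT1c.integrable_of_hasCompactSupport hFT1cs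
  have h𝓕eq : (𝓕 Θ) = fun v => FT1 Θ (2 * Real.pi * v) := funext hrel2
  have h𝓕cont : Continuous (𝓕 Θ) := by
    rw [h𝓕eq]; exact hFT1c.comp (continuous_const.mul continuous_id)
  have h𝓕cs : HasCompactSupport (𝓕 Θ) := by
    apply HasCompactSupport.intro (isCompact_closedBall (0:ℝ) (1/(100*d)/(2*Real.pi)))
    intro v hv
    rw [hrel2]
    apply hθ0
    simp only [Metric.mem_closedBall, Real.dist_eq, sub_zero, not_le] at hv
    rw [abs_mul]
    have h2π : |2 * Real.pi| = 2 * Real.pi := abs_of_pos (by positivity)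
    rw [h2π]
    rw [div_lt_iff₀ (by positivity)] at hv
    nlinarith [abs_nonneg v]
  have h𝓕int : Integrable (𝓕 Θ) := h𝓕cont.integrable_of_hasCompactSupport h𝓕cs
  have hinv : 𝓕⁻ (𝓕 Θ) = Θ := hΘc.fourierInv_fourier_eq hΘi h𝓕int
  have hinv' : ∀ x : ℝ, ∫ η : ℝ, Complex.exp (Complex.I * ((x * η : ℝ) : ℂ)) * FT1 Θ η
      = 2 * Real.pi * Θ x := by
    intro x
    set w : ℝ → ℂ := fun η => Complex.exp (Complex.I * ((x * η : ℝ) : ℂ)) * FT1 Θ η with hw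
    have h1 : Θ x = ∫ v : ℝ, w (2 * Real.pi * v) := by
      conv_lhs => rw [← hinv]
      rw [Real.fourierInv_eq']
      apply integral_congr_ae
      filter_upwards with v
      rw [smul_eq_mul, hw]
      simp only
      rw [hrel2]
      congr 1
      have : (inner ℝ v x : ℝ) = v * x := by simp [RCLike.inner_apply]; ring
      rw [this]
      push_cast
      ring
    rw [MeasureTheory.Measure.integral_comp_mul_left w (2 * Real.pi)] at h1
    have habs : |(2 * Real.pi)⁻¹| = (2 * Real.pi)⁻¹ := abs_of_pos (by positivity)
    rw [habs, Complex.real_smul] at h1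
    rw [h1]
    have hπc : (Real.pi : ℂ) ≠ 0 := by exact_mod_cast Real.pi_ne_zero
    push_cast
    field_simp
  have hπc : (Real.pi : ℂ) ≠ 0 := by exact_mod_cast Real.pi_ne_zero
  have hsq : (fun t : ℝ => ((θ t : ℂ)) ^ 2) = fun t : ℝ => Θ t * Θ t := by
    funext t; rw [sq]
  rw [hsq]
  unfold FT1
  set F : ℝ → ℝ → ℂ := fun x η =>
    Complex.exp (-(Complex.I * ((x * ξ : ℝ) : ℂ))) * Θ x *
      (Complex.exp (Complex.I * ((x * η : ℝ) : ℂ)) * FT1 Θ η) with hF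
  have key : ∀ x : ℝ, Complex.exp (-(Complex.I * ((x * ξ : ℝ) : ℂ))) * (Θ x * Θ x)
      = ((2 * Real.pi : ℝ) : ℂ)⁻¹ * ∫ η : ℝ, F x η := by
    intro x
    rw [hF]
    simp only
    rw [MeasureTheory.integral_const_mul, hinv' x]
    push_cast
    field_simp
  simp_rw [key]
  rw [MeasureTheory.integral_const_mul]
  have hFint : Integrable (Function.uncurry F) (volume.prod volume) := by
    have hcont : Continuous (Function.uncurry F) := by
      apply Continuous.mul
      · apply Continuous.mul
        · exact Complex.continuous_exp.comp ((continuous_const.mul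
            (Complex.continuous_ofReal.comp (continuous_fst.mul continuous_const))).neg)
        · exact hΘc.comp continuous_fst
      · exact (Complex.continuous_exp.comp (continuous_const.mul
          (Complex.continuous_ofReal.comp (continuous_fst.mul continuous_snd)))).mul
          (hFT1c.comp continuous_snd)
    apply Integrable.mono' ((hΘi.norm).mul_prod (hFT1int.norm))
    · exact hcont.aestronglyMeasurable
    · filter_upwards with p
      rw [Function.uncurry, hF]
      simp only
      rw [norm_mul, norm_mul, norm_mul, norm_exp_neg_I_mul, norm_exp_I_mul,
        one_mul, one_mul]
  rw [MeasureTheory.integral_integral_swap hFint]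
  have hin : ∀ η : ℝ, ∫ x : ℝ, F x η = FT1 Θ (ξ - η) * FT1 Θ η := by
    intro η
    have hpt : ∀ x : ℝ, F x η
        = (Complex.exp (-(Complex.I * ((x * (ξ - η) : ℝ) : ℂ))) * Θ x) * FT1 Θ η := by
      intro x
      rw [hF]
      simp only
      rw [show Complex.exp (-(Complex.I * ((x * ξ : ℝ) : ℂ))) * Θ x *
          (Complex.exp (Complex.I * ((x * η : ℝ) : ℂ)) * FT1 Θ η)
          = (Complex.exp (-(Complex.I * ((x * ξ : ℝ) : ℂ))) *
            Complex.exp (Complex.I * ((x * η : ℝ) : ℂ))) * Θ x * FT1 Θ η from by ring]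
      congr 2
      rw [← Complex.exp_add]
      congr 1
      push_cast
      ring
    simp_rw [hpt]
    rw [MeasureTheory.integral_mul_const]
    rfl
  have hzero : ∀ η : ℝ, ∫ x : ℝ, F x η = 0 := by
    intro η
    rw [hin η]
    have hdd : 1 / (50 * (d:ℝ)) = 2 * (1 / (100 * d)) := by
      field_simp; ring
    rcases le_or_gt (1 / (100 * (d:ℝ))) |η| with h | h
    · rw [hθ0 η h, mul_zero]
    · rw [hθ0 (ξ - η) (by
        have := abs_sub_abs_le_abs_sub ξ η
        linarith), zero_mul]
  simp_rw [hzero]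
  rw [MeasureTheory.integral_zero, mul_zero]

lemma FT_prod (d : ℕ) (g : Fin d → ℝ → ℂ) (ξ : EuclideanSpace ℝ (Fin d)) :
    FT d (fun y => ∏ i, g i (y i)) ξ = ∏ i, FT1 (g i) (ξ i) := by
  unfold FT
  have hpt : ∀ y : EuclideanSpace ℝ (Fin d),
      Complex.exp (-(Complex.I * ((inner ℝ y ξ : ℝ) : ℂ))) * ∏ i, g i (y i)
      = ∏ i, (Complex.exp (-(Complex.I * ((y i * ξ i : ℝ) : ℂ))) * g i (y i)) := by
    intro y
    rw [Finset.prod_mul_distrib]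
    congr 1
    have hi : (inner ℝ y ξ : ℝ) = ∑ i, y i * ξ i := by
      simp [PiLp.inner_apply, RCLike.inner_apply, mul_comm]
    rw [hi, ← Complex.exp_sum]
    congr 1
    push_cast
    rw [Finset.mul_sum, ← Finset.sum_neg_distrib]
  simp_rw [hpt]
  have hmp := (EuclideanSpace.volume_preserving_symm_measurableEquiv_toLp (Fin d)).symm
  rw [← hmp.integral_comp (MeasurableEquiv.measurableEmbedding _)]
  have : (fun x : Fin d → ℝ =>
      (fun y : EuclideanSpace ℝ (Fin d) =>
        ∏ i, (Complex.exp (-(Complex.I * ((y i * ξ i : ℝ) : ℂ))) * g i (y i)))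
        ((MeasurableEquiv.toLp 2 (Fin d → ℝ)).symm.symm x))
      = fun x : Fin d → ℝ =>
        ∏ i, (Complex.exp (-(Complex.I * ((x i * ξ i : ℝ) : ℂ))) * g i (x i)) := rfl
  rw [this, MeasureTheory.integral_fintype_prod_volume_eq_prod
    (f := fun i t => Complex.exp (-(Complex.I * ((t * ξ i : ℝ) : ℂ))) * g i t)]
  rfl

end AuxLemmas

set_option maxHeartbeats 2000000 in
/-- With `Θ₂(x) = (1/2) θ(x₁)²⋯θ(x_d)² cos((17/12) x_d)`, for `k ≠ ℓ` in
`N(n)` the block `Δ_ℓ[Θ₂(2^k A(· - 2^{2n+k} e))]` vanishes identically. -/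
theorem stmt12 (d : ℕ) (hd : 4 ≤ d) (ε : ℝ) (hε : ε ∈ Set.Ioo (0 : ℝ) 1)
    (θ : SchwartzMap ℝ ℝ)
    (hθsm : ContDiff ℝ (⊤ : ℕ∞) fun ξ : ℝ => FT1 (fun x => (θ x : ℂ)) ξ)
    (hθ01 : ∀ ξ : ℝ, (FT1 (fun x => (θ x : ℂ)) ξ).im = 0 ∧
      (FT1 (fun x => (θ x : ℂ)) ξ).re ∈ Set.Icc (0 : ℝ) 1)
    (hθ1 : ∀ ξ : ℝ, |ξ| ≤ 1 / (200 * d) → FT1 (fun x => (θ x : ℂ)) ξ = 1)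
    (hθ0 : ∀ ξ : ℝ, 1 / (100 * d) ≤ |ξ| → FT1 (fun x => (θ x : ℂ)) ξ = 0)
    (χ : EuclideanSpace ℝ (Fin d) → ℝ)
    (hχsm : ContDiff ℝ (⊤ : ℕ∞) χ)
    (hχrad : ∀ x y : EuclideanSpace ℝ (Fin d), ‖x‖ = ‖y‖ → χ x = χ y)
    (hχ01 : ∀ x, χ x ∈ Set.Icc (0 : ℝ) 1)
    (hχsupp : ∀ x : EuclideanSpace ℝ (Fin d), ¬ ‖x‖ ≤ 4 / 3 → χ x = 0)
    (hχone : ∀ x : EuclideanSpace ℝ (Fin d), ‖x‖ ≤ 3 / 4 → χ x = 1)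
    (n : ℕ) (hn : 0 < n) (h16 : 16 ∣ n) (k ℓ : ℕ) (hk : k ∈ Nset n) (hℓ : ℓ ∈ Nset n)
    (hkℓ : k ≠ ℓ) :
    ∀ x : EuclideanSpace ℝ (Fin d),
      LPblock d χ (ℓ : ℤ)
        (fun y => (((fun z : EuclideanSpace ℝ (Fin d) =>
            (1 / 2 : ℝ) * (∏ i, θ (z i) ^ 2) * Real.cos (17 / 12 * coord d (d - 1) z))
          ((2 : ℝ) ^ k • Amap d ε (y - (2 : ℝ) ^ (2 * n + k) • evec d)) : ℝ) : ℂ)) x = 0 := by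
  
  classical
  have hd1 : d - 1 < d := by omega
  have hd4 : (4:ℝ) ≤ (d:ℝ) := by exact_mod_cast hd
  have hd0 : (0:ℝ) < d := by linarith
  set iL : Fin d := ⟨d - 1, hd1⟩ with hiL
  have hiLval : (iL : ℕ) = d - 1 := rfl
  have hiL2 : ¬ ((iL : ℕ) < 2) := by rw [hiLval]; omega
  have hcond : ∀ i : Fin d, (i : ℕ) = d - 1 ↔ i = iL := by
    intro i
    constructor
    · intro h; exact Fin.ext h
    · rintro rfl; rfl
  set a : Fin d → ℝ := fun i => 2 ^ k * (if (i : ℕ) < 2 then ε else 1) with ha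
  set c0 : ℝ := 2 ^ (2 * n + k) with hc0
  set β : Fin d → ℝ := fun i =>
    -(a i * (c0 * (if (i : ℕ) < 2 then Real.sqrt 2 / 2 else 0))) with hβ
  set g : Fin d → ℝ → ℂ := fun i s =>
    (((if (i : ℕ) = d - 1 then (1/2) * Real.cos (17 / 12 * (a i * s + β i)) else 1) : ℝ) : ℂ) *
      ((θ (a i * s + β i) : ℂ)) ^ 2 with hg
  set M : ℝ := (2 : ℝ) ^ k with hM
  have hM0 : (0:ℝ) < M := by positivity
  have h2k : (0:ℝ) < 2 ^ k := by positivity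
  have ha0 : ∀ i : Fin d, 0 < a i := by
    intro i; rw [ha]
    by_cases h2 : (i:ℕ) < 2
    · simp only [h2, if_true]; exact mul_pos h2k hε.1
    · simp only [h2, if_false, mul_one]; exact h2k
  have haM : ∀ i : Fin d, a i ≤ M := by
    intro i; rw [ha, hM]
    by_cases h2 : (i:ℕ) < 2
    · simp only [h2, if_true]; nlinarith [hε.2]
    · simp only [h2, if_false, mul_one, le_refl]
  have haiL : a iL = M := by rw [ha, hM]; simp [hiL2]
  have hβiL : β iL = 0 := by rw [hβ]; simp [hiL2]
  -- the coordinates of the rescaled argument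
  have hz : ∀ (y : EuclideanSpace ℝ (Fin d)) (i : Fin d),
      ((2 : ℝ) ^ k • Amap d ε (y - (2 : ℝ) ^ (2 * n + k) • evec d)) i = a i * y i + β i := by
    intro y i
    simp only [PiLp.smul_apply, PiLp.sub_apply, smul_eq_mul, Amap, evec, PiLp.toLp_apply, ha, hβ, hc0]
    by_cases h2 : (i:ℕ) < 2 <;> simp [h2, hM] <;> ring
  have hcoord : ∀ y : EuclideanSpace ℝ (Fin d),
      coord d (d - 1) ((2 : ℝ) ^ k • Amap d ε (y - (2 : ℝ) ^ (2 * n + k) • evec d))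
        = a iL * y iL + β iL := by
    intro y
    unfold coord
    rw [dif_pos hd1]
    exact hz y iL
  -- factorization of the target function
  have hf : ∀ y : EuclideanSpace ℝ (Fin d),
      (((fun z : EuclideanSpace ℝ (Fin d) =>
          (1 / 2 : ℝ) * (∏ i, θ (z i) ^ 2) * Real.cos (17 / 12 * coord d (d - 1) z))
        ((2 : ℝ) ^ k • Amap d ε (y - (2 : ℝ) ^ (2 * n + k) • evec d)) : ℝ) : ℂ)
        = ∏ i, g i (y i) := by
    intro y
    simp only [hcoord y]
    simp only [hz y]
    rw [hg]
    simp only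
    rw [Finset.prod_mul_distrib]
    have h1 : (∏ i : Fin d,
        (((if (i : ℕ) = d - 1 then (1/2) * Real.cos (17 / 12 * (a i * y i + β i)) else 1) : ℝ) : ℂ))
        = (((1/2) * Real.cos (17 / 12 * (a iL * y iL + β iL)) : ℝ) : ℂ) := by
      simp_rw [hcond]
      rw [show (fun i : Fin d =>
          (((if i = iL then (1/2) * Real.cos (17 / 12 * (a i * y i + β i)) else 1) : ℝ) : ℂ))
        = (fun i : Fin d =>
          (if i = iL then (((1/2) * Real.cos (17 / 12 * (a i * y i + β i)) : ℝ) : ℂ) else 1))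
        from by funext i; split <;> simp]
      rw [Finset.prod_ite_eq' Finset.univ iL
        (fun i => (((1/2) * Real.cos (17 / 12 * (a i * y i + β i)) : ℝ) : ℂ))]
      simp
    rw [h1]
    push_cast
    ring
  intro x
  -- pointwise vanishing of the multiplier times the Fourier transform
  have hmain : ∀ ξ : EuclideanSpace ℝ (Fin d),
      ((phiLP d χ ((2 : ℝ) ^ (-(ℓ:ℤ)) • ξ) : ℝ) : ℂ) * FT d (fun y => ∏ i, g i (y i)) ξ = 0 := by
    intro ξ
    by_cases hφ0 : phiLP d χ ((2 : ℝ) ^ (-(ℓ:ℤ)) • ξ) = 0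
    · rw [hφ0]; simp
    · suffices hFT : FT d (fun y => ∏ i, g i (y i)) ξ = 0 by rw [hFT, mul_zero]
      set v : EuclideanSpace ℝ (Fin d) := (2:ℝ)^(-(ℓ:ℤ)) • ξ with hv
      have h2ℓ : (0:ℝ) < (2:ℝ)^ℓ := by positivity
      have hzn : ((2:ℝ)^(-(ℓ:ℤ))) = ((2:ℝ)^ℓ)⁻¹ := by rw [zpow_neg, zpow_natCast]
      have hnv : ‖v‖ = ((2:ℝ)^ℓ)⁻¹ * ‖ξ‖ := by
        rw [hv, norm_smul, Real.norm_eq_abs, hzn, abs_of_pos (by positivity)]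
      have hnv2 : ‖(2:ℝ)⁻¹ • v‖ = 2⁻¹ * ‖v‖ := by
        rw [norm_smul, Real.norm_eq_abs, abs_of_pos (by norm_num)]
      have hv1 : ¬ ‖v‖ ≤ 3/4 := by
        intro hle
        apply hφ0
        unfold phiLP
        rw [hχone v hle, hχone ((2:ℝ)⁻¹ • v) (by rw [hnv2]; linarith [norm_nonneg v])]
        ring
      have hv2 : ‖(2:ℝ)⁻¹ • v‖ ≤ 4/3 := by
        by_contra hgt
        apply hφ0
        unfold phiLP
        rw [hχsupp _ hgt, hχsupp v (by rw [hnv2] at hgt; intro hc; apply hgt; linarith)]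
        ring
      have hcc : (2:ℝ)^ℓ * ((2:ℝ)^ℓ)⁻¹ = 1 := mul_inv_cancel₀ h2ℓ.ne'
      have hv1' : 3/4 < ((2:ℝ)^ℓ)⁻¹ * ‖ξ‖ := by rw [← hnv]; exact lt_of_not_ge hv1
      have hL1 : 3/4 * 2^ℓ < ‖ξ‖ := by nlinarith [hv1', h2ℓ, hcc]
      have hv2' : 2⁻¹ * (((2:ℝ)^ℓ)⁻¹ * ‖ξ‖) ≤ 4/3 := by rw [← hnv, ← hnv2]; exact hv2
      have hL2 : ‖ξ‖ ≤ 8/3 * 2^ℓ := by nlinarith [hv2', h2ℓ, hcc]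
      rw [FT_prod]
      by_contra hne
      have hfac : ∀ i : Fin d, FT1 (g i) (ξ i) ≠ 0 := fun i hi =>
        hne (Finset.prod_eq_zero (Finset.mem_univ i) hi)
      set t : ℝ := 1/(50*(d:ℝ)) with htd
      have ht0 : 0 < t := by rw [htd]; positivity
      have ht200 : t ≤ 1/200 := by
        rw [htd, div_le_div_iff₀ (by linarith) (by norm_num)]; linarith
      have hdt : (d:ℝ) * t = 1/50 := by rw [htd]; field_simp
      have hBsupp : ∀ ζ : ℝ, t ≤ |ζ| → FT1 (fun u => ((θ u : ℂ))^2) ζ = 0 := by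
        intro ζ hζ
        rw [htd] at hζ
        exact ft1_sq_support d hd θ hθsm hθ0 hζ
      have hF1 : ∀ i : Fin d, i ≠ iL → |ξ i| < M * t := by
        intro i hi
        have hgi : g i = fun s => ((θ (a i * s + β i) : ℂ))^2 := by
          funext s; rw [hg]; simp only
          rw [if_neg (fun h => hi ((hcond i).1 h))]
          norm_num
        have heq : FT1 (g i) (ξ i) = |(a i)⁻¹| •
            (Complex.exp (Complex.I * ((β i * ξ i / a i : ℝ):ℂ)) *
              FT1 (fun u => ((θ u : ℂ))^2) (ξ i / a i)) := by
          rw [hgi]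
          exact ft1_comp_mul_add (fun u => ((θ u:ℂ))^2) (a i) (β i) (ξ i) (ha0 i).ne'
        have hne2 : FT1 (fun u => ((θ u:ℂ))^2) (ξ i / a i) ≠ 0 := by
          intro h0; apply hfac i; rw [heq, h0, mul_zero, smul_zero]
        have hlt : |ξ i / a i| < t := by
          by_contra hge; exact hne2 (hBsupp _ (le_of_not_gt hge))
        rw [abs_div, abs_of_pos (ha0 i), div_lt_iff₀ (ha0 i)] at hlt
        calc |ξ i| < t * a i := hlt
          _ ≤ t * M := by nlinarith [haM i, ht0]
          _ = M * t := mul_comm _ _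
      have hθbd : ∃ C, ∀ u : ℝ, ‖((θ u : ℂ))‖ ≤ C :=
        ⟨SchwartzMap.seminorm ℝ 0 0 θ, fun u => by
          rw [Complex.norm_real]; exact SchwartzMap.norm_le_seminorm ℝ θ u⟩
      have hB : Integrable (fun u : ℝ => ((θ u : ℂ))^2) := by
        have hrw : (fun u : ℝ => ((θ u:ℂ))^2) = fun u => (θ u:ℂ) * (θ u:ℂ) :=
          funext fun u => sq _
        rw [hrw]
        exact (θ.integrable.ofReal).bdd_mul (c := hθbd.choose)
          ((Complex.continuous_ofReal.comp θ.continuous).aestronglyMeasurable) (Filter.Eventually.of_forall hθbd.choose_spec)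
      have hint : ∀ ζ : ℝ, Integrable
          (fun u : ℝ => Complex.exp (-(Complex.I * ((u * ζ : ℝ):ℂ))) * ((θ u:ℂ))^2) := by
        intro ζ
        apply hB.bdd_mul (c := 1)
        · exact (Complex.continuous_exp.comp ((continuous_const.mul
            (Complex.continuous_ofReal.comp (continuous_id.mul continuous_const))).neg)).aestronglyMeasurable
        · exact Filter.Eventually.of_forall (fun u => le_of_eq (norm_exp_neg_I_mul _))
      have hF2 : M * (17/12 - t) < |ξ iL| ∧ |ξ iL| < M * (17/12 + t) := by
        have h1 := hfac iL
        have hgiL : g iL = fun s => ((1/2 : ℝ) : ℂ) *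
            ((fun u => ((Real.cos (17/12 * u) : ℝ):ℂ) * ((θ u : ℂ))^2) (M * s + 0)) := by
          funext s
          simp only [hg, hiLval]
          rw [if_true, haiL, hβiL]
          push_cast
          ring
        have heq : FT1 (g iL) (ξ iL) = ((1/2:ℝ):ℂ) * (|M⁻¹| •
            (Complex.exp (Complex.I * ((0 * ξ iL / M : ℝ):ℂ)) *
              FT1 (fun u => ((Real.cos (17/12*u):ℝ):ℂ) * ((θ u:ℂ))^2) (ξ iL / M))) := by
          rw [hgiL, ft1_const_mul]
          congr 1
          exact ft1_comp_mul_add (fun u => ((Real.cos (17/12*u):ℝ):ℂ) * ((θ u:ℂ))^2)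
            M 0 (ξ iL) hM0.ne'
        have hsplit := ft1_cos_split (fun u => ((θ u:ℂ))^2) (17/12) (ξ iL / M) (hint _) (hint _)
        have hCne : FT1 (fun u => ((Real.cos (17/12*u):ℝ):ℂ) * ((θ u:ℂ))^2) (ξ iL / M) ≠ 0 := by
          intro h0; apply h1; rw [heq, h0, mul_zero, smul_zero, mul_zero]
        rw [hsplit] at hCne
        set ζ := ξ iL / M with hζdef
        have hcase : |ζ - 17/12| < t ∨ |ζ + 17/12| < t := by
          by_contra hboth
          push_neg at hboth
          apply hCne
          rw [hBsupp _ hboth.1, hBsupp _ hboth.2]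
          norm_num
        have habs : 17/12 - t < |ζ| ∧ |ζ| < 17/12 + t := by
          rcases hcase with h | h
          · rw [abs_lt] at h
            have hζpos : 0 < ζ := by linarith
            rw [abs_of_pos hζpos]; constructor <;> linarith
          · rw [abs_lt] at h
            have hζneg : ζ < 0 := by linarith
            rw [abs_of_neg hζneg]; constructor <;> linarith
        have hxiL : |ξ iL| = |ζ| * M := by
          rw [hζdef, abs_div, abs_of_pos hM0]; field_simp
        constructor
        · rw [hxiL]; nlinarith [habs.1, hM0]
        · rw [hxiL]; nlinarith [habs.2, hM0]
      have hsum : ‖ξ‖^2 = ∑ i, (ξ i)^2 := by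
        rw [EuclideanSpace.norm_eq, Real.sq_sqrt (Finset.sum_nonneg fun i _ => sq_nonneg _)]
        simp [Real.norm_eq_abs, sq_abs]
      have hlower : |ξ iL| ≤ ‖ξ‖ := by
        have h1 : (ξ iL)^2 ≤ ∑ i, (ξ i)^2 :=
          Finset.single_le_sum (fun i _ => sq_nonneg (ξ i)) (Finset.mem_univ iL)
        nlinarith [norm_nonneg ξ, abs_nonneg (ξ iL), sq_abs (ξ iL), hsum]
      have hupper : ‖ξ‖^2 ≤ ((d:ℝ) - 1) * (M*t)^2 + (M*(17/12+t))^2 := by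
        rw [hsum, ← Finset.sum_erase_add Finset.univ _ (Finset.mem_univ iL)]
        have hbound1 : ∑ i ∈ Finset.univ.erase iL, (ξ i)^2 ≤ ((d:ℝ)-1) * (M*t)^2 := by
          have hcard : (Finset.univ.erase iL).card = d - 1 := by
            rw [Finset.card_erase_of_mem (Finset.mem_univ iL), Finset.card_univ, Fintype.card_fin]
          have hcast : ((d - 1 : ℕ) : ℝ) = (d:ℝ) - 1 := by
            rw [Nat.cast_sub (by omega)]; norm_num
          calc ∑ i ∈ Finset.univ.erase iL, (ξ i)^2
              ≤ (Finset.univ.erase iL).card • ((M*t)^2) := by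
                apply Finset.sum_le_card_nsmul
                intro i hi
                have := hF1 i (Finset.ne_of_mem_erase hi)
                nlinarith [abs_nonneg (ξ i), sq_abs (ξ i)]
            _ = ((d - 1 : ℕ) : ℝ) * (M*t)^2 := by rw [hcard, nsmul_eq_mul]
            _ ≤ ((d:ℝ) - 1) * (M*t)^2 := by rw [hcast]
        have hbound2 : (ξ iL)^2 ≤ (M*(17/12+t))^2 := by
          nlinarith [hF2.2, abs_nonneg (ξ iL), sq_abs (ξ iL), hM0, ht0]
        linarith
      rcases Nat.lt_or_ge k ℓ with hkl | hkl
      · have h2l : (2:ℝ)^(k+1) ≤ (2:ℝ)^ℓ := pow_le_pow_right₀ (by norm_num) hkl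
        rw [pow_succ] at h2l
        have hgt : 3/2 * M < ‖ξ‖ := by rw [hM]; nlinarith [hL1, h2k]
        have e1 : ((d:ℝ)-1)*(M*t)^2 ≤ (1/10000) * M^2 := by
          have h1 : ((d:ℝ)-1)*t^2 ≤ 1/10000 := by nlinarith [hdt, ht0, ht200, hd4]
          nlinarith [sq_nonneg M, h1, ht0]
        have e2 : (M*(17/12+t))^2 ≤ (853/600)^2 * M^2 := by nlinarith [ht200, ht0, hM0]
        nlinarith [hupper, e1, e2, hgt, hM0, norm_nonneg ξ]
      · have hlk : ℓ < k := by omega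
        have h2l : (2:ℝ)^(ℓ+1) ≤ (2:ℝ)^k := pow_le_pow_right₀ (by norm_num) hlk
        rw [pow_succ] at h2l
        have hle : ‖ξ‖ ≤ 4/3 * M := by rw [hM]; nlinarith [hL2, h2ℓ]
        nlinarith [ht200, hM0, hlower, hF2.1, hle]
  -- conclude
  unfold LPblock FTinv
  simp only [← hc0, ← hM] at hf
  simp only [hf, hmain, mul_zero, integral_zero]
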